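/- Let X, Y, Z, W be subsets of Fin m with |X|, |Y|, |Z|, |W| pairwise distinct and all < m, and let A = Δ_X^c, B = Δ_Y^c, C = Δ_Z^c, E = Δ_W^c. Let s₁ < s₂ < s₃ < s₄ be the values |X|, |Y|, |Z|, |W| arranged in increasing order. Then: w(t) = 0 if and only if t = (0,0,0,0); every message t ≠ (0,0,0,0) satisfies 2·w(t) ≥ (2^m − 2^{s₁})(2^m − 2^{s₂})(2^m − 2^{s₃} − 2^{s₄})·2^m; and there exists a message t with 2·w(t) = (2^m − 2^{s₁})(2^m − 2^{s₂})(2^m − 2^{s₃} − 2^{s₄})·2^m. (Hence C_D^{(2)} has length (2^m−2^{|X|})(2^m−2^{|Y|})(2^m−2^{|Z|})(2^m−2^{|W|}), dimension 4m and minimum distance (2^m−2^{s₁})(2^m−2^{s₂})(2^m−2^{s₃}−2^{s₄})2^{m−1}.) -/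

import Mathlib

open Finset

/-- Euclidean dot product of vectors over `𝔽₂`. -/
def dotp {m : ℕ} (x y : Fin m → ZMod 2) : ZMod 2 := ∑ i, x i * y i

/-- Support of a vector over `𝔽₂`. -/
def supp {m : ℕ} (v : Fin m → ZMod 2) : Finset (Fin m) :=
  Finset.univ.filter fun i => v i ≠ 0

/-- The simplicial complex `Δ_S` generated by `S ⊆ [m]`. -/
def delta {m : ℕ} (S : Finset (Fin m)) : Finset (Fin m → ZMod 2) :=
  Finset.univ.filter fun u => supp u ⊆ S

/-- The complement `Δ_S^c` of the simplicial complex generated by `S`. -/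
def deltac {m : ℕ} (S : Finset (Fin m)) : Finset (Fin m → ZMod 2) :=
  Finset.univ \ delta S

/-- A message `(x₁, x₂, x₃, x₄)` consisting of four vectors over `𝔽₂`. -/
abbrev Msg (m : ℕ) :=
  (Fin m → ZMod 2) × (Fin m → ZMod 2) × (Fin m → ZMod 2) × (Fin m → ZMod 2)

/-- The value of the codeword of the subfield code `C_D^{(2)}` associated to the
message `t = (x₁,x₂,x₃,x₄)` at the position `p = (a,b,c,e)`:
`(x₁+x₄)·a + x₃·b + x₂·c + x₁·e`. -/
def cword {m : ℕ} (t p : Msg m) : ZMod 2 :=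
  dotp (t.1 + t.2.2.2) p.1 + dotp t.2.2.1 p.2.1 + dotp t.2.1 p.2.2.1 +
    dotp t.1 p.2.2.2

/-- Hamming weight of the codeword associated to the message `t`, for the code
with defining positions `A × B × C × E`. -/
def cw {m : ℕ} (A B C E : Finset (Fin m → ZMod 2)) (t : Msg m) : ℕ :=
  ((A ×ˢ B ×ˢ C ×ˢ E).filter fun p => cword t p = 1).card

/-!
With `sign₂ x = (-1)^x` and the character sums `χ_D(u) = ∑_{a ∈ D} (-1)^{u·a}`, counting ones by
characters gives `2·w(t) = |A||B||C||E| - χ_A(u₁) χ_B(u₂) χ_C(u₃) χ_E(u₄)`, where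
`(u₁, u₂, u₃, u₄) = (x₁ + x₄, x₃, x₂, x₁)` ranges over all quadruples as `t` does. As `Δ_S` is a
box, `χ_{Δ_S^c}(u)` is `2^m - 2^|S|` at `u = 0`, `-2^|S|` if `u ≠ 0` vanishes on `S`, and `0`
otherwise. For `t ≠ 0`, either a single factor is non-positive and the others are positive, or
two factors `i ≠ j` have modulus at most `2^|S_i|`, `2^|S_j|`; then the product is at most
`2^(|S_i| + |S_j|)` times the two remaining lengths, which is largest when `i, j` carry the two
largest sizes `s₃, s₄`. Taking `uᵢ ≠ 0` vanishing on `Sᵢ` for those two sets and `uᵢ = 0` for the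
other two attains the bound.
-/

theorem prod_le_of_pair_bound {R ι : Type*} [CommRing R] [LinearOrder R] [IsStrictOrderedRing R]
    [Fintype ι] [DecidableEq ι] {a N P : ι → R} {J : Finset ι} {B : R} (hJ : J.Nonempty)
    (hout : ∀ i ∉ J, a i = N i) (hin : ∀ i ∈ J, -P i ≤ a i ∧ a i ≤ 0) (hP : ∀ i, 0 ≤ P i)
    (hPN : ∀ i, P i ≤ N i) (hB : 0 ≤ B)
    (hpair : ∀ i j, i ≠ j → P i * P j * ∏ k ∈ univ \ {i, j}, N k ≤ B) :
    ∏ i, a i ≤ B := by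
  have hN : ∀ i, 0 ≤ N i := fun i => (hP i).trans (hPN i)
  have habsP : ∀ i ∈ J, |a i| ≤ P i :=
    fun i hi => abs_le.2 ⟨(hin i hi).1, (hin i hi).2.trans (hP i)⟩
  have habsN : ∀ i, |a i| ≤ N i := fun i => by
    by_cases hi : i ∈ J
    · exact (habsP i hi).trans (hPN i)
    · rw [hout i hi, abs_of_nonneg (hN i)]
  rcases hJ.exists_eq_singleton_or_nontrivial with ⟨j, rfl⟩ | ⟨i, hi, j, hj, hij⟩
  · rw [← mul_prod_erase univ a (mem_univ j)]
    refine (mul_nonpos_of_nonpos_of_nonneg (hin j (mem_singleton_self j)).2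
      (prod_nonneg fun k hk => ?_)).trans hB
    rw [hout k (by simpa using ne_of_mem_erase hk)]
    exact hN k
  · calc ∏ k, a k ≤ |∏ k, a k| := le_abs_self _
      _ = |a i| * |a j| * ∏ k ∈ univ \ {i, j}, |a k| := by
        rw [abs_prod, ← prod_sdiff (subset_univ {i, j}), prod_pair hij, mul_comm]
      _ ≤ P i * P j * ∏ k ∈ univ \ {i, j}, N k :=
        mul_le_mul (mul_le_mul (habsP i hi) (habsP j hj) (abs_nonneg _) (hP i))
          (prod_le_prod (fun k _ => abs_nonneg _) fun k _ => habsN k)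
          (prod_nonneg fun _ _ => abs_nonneg _) (mul_nonneg (hP i) (hP j))
      _ ≤ B := hpair i j hij

lemma two_pow_le_two_pow_sub_two_pow {c m : ℕ} (h : c < m) : (2 : ℤ) ^ c ≤ 2 ^ m - 2 ^ c := by
  have := pow_le_pow_right₀ (one_le_two : (1 : ℤ) ≤ 2) (Nat.succ_le_of_lt h)
  rw [pow_succ] at this
  linarith

lemma two_pow_add_two_pow_lt {a b m : ℕ} (hab : a < b) (hbm : b < m) :
    2 ^ a + 2 ^ b < 2 ^ m := by
  have h₁ : 2 ^ a < 2 ^ b := Nat.pow_lt_pow_right one_lt_two hab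
  have h₂ : 2 ^ (b + 1) ≤ 2 ^ m := Nat.pow_le_pow_right two_pos hbm
  rw [pow_succ] at h₂
  omega

lemma two_pow_mul_two_pow_mul_le {m a b c d s₁ s₂ s₃ s₄ : ℕ} (hab : a + b ≤ s₃ + s₄)
    (hc : s₁ ≤ c) (hd : s₂ ≤ d) (hcm : c ≤ m) (hdm : d ≤ m) :
    (2 : ℤ) ^ a * 2 ^ b * ((2 ^ m - 2 ^ c) * (2 ^ m - 2 ^ d)) ≤
      2 ^ s₃ * 2 ^ s₄ * ((2 ^ m - 2 ^ s₁) * (2 ^ m - 2 ^ s₂)) := by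
  have hpow : ∀ {x y : ℕ}, x ≤ y → (2 : ℤ) ^ x ≤ 2 ^ y := pow_le_pow_right₀ one_le_two
  rw [← pow_add, ← pow_add]
  exact mul_le_mul (hpow hab) (mul_le_mul (sub_le_sub_left (hpow hc) _)
    (sub_le_sub_left (hpow hd) _) (sub_nonneg.2 (hpow hdm)) (sub_nonneg.2 (hpow (hc.trans hcm))))
    (mul_nonneg (sub_nonneg.2 (hpow hcm)) (sub_nonneg.2 (hpow hdm))) (by positivity)

lemma two_pow_sub_mul_pos {m s₁ s₂ s₃ s₄ : ℕ} (h₁ : s₁ < m) (h₂ : s₂ < m)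
    (h₃₄ : 2 ^ s₃ + 2 ^ s₄ < 2 ^ m) :
    0 < (2 ^ m - 2 ^ s₁) * (2 ^ m - 2 ^ s₂) * (2 ^ m - 2 ^ s₃ - 2 ^ s₄) * 2 ^ m := by
  have := Nat.pow_lt_pow_right one_lt_two h₁
  have := Nat.pow_lt_pow_right one_lt_two h₂
  refine Nat.mul_pos (Nat.mul_pos (Nat.mul_pos ?_ ?_) ?_) (by positivity) <;> omega

lemma natCast_two_pow_sub_mul_eq_sub {m s₁ s₂ s₃ s₄ : ℕ} (h₁ : s₁ ≤ m) (h₂ : s₂ ≤ m)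
    (h₃₄ : 2 ^ s₃ + 2 ^ s₄ ≤ 2 ^ m) :
    (((2 ^ m - 2 ^ s₁) * (2 ^ m - 2 ^ s₂) * (2 ^ m - 2 ^ s₃ - 2 ^ s₄) * 2 ^ m : ℕ) : ℤ) =
      (2 ^ m - 2 ^ s₁) * (2 ^ m - 2 ^ s₂) * (2 ^ m - 2 ^ s₃) * (2 ^ m - 2 ^ s₄) -
        2 ^ s₃ * 2 ^ s₄ * ((2 ^ m - 2 ^ s₁) * (2 ^ m - 2 ^ s₂)) := by
  push_cast [Nat.cast_sub (Nat.pow_le_pow_right two_pos h₁),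
    Nat.cast_sub (Nat.pow_le_pow_right two_pos h₂), Nat.cast_sub (le_tsub_of_add_le_left h₃₄),
    Nat.cast_sub (le_of_add_le_left h₃₄)]
  ring

section SortedValues

variable {ι : Type*} [Fintype ι] {c : ι → ℕ} {s₁ s₂ s₃ s₄ : ℕ}

lemma card_quadruple_of_lt (h12 : s₁ < s₂) (h23 : s₂ < s₃) (h34 : s₃ < s₄) :
    #({s₁, s₂, s₃, s₄} : Finset ℕ) = 4 := by
  rw [card_insert_of_notMem, card_insert_of_notMem, card_pair] <;> simp <;> omega

lemma injective_of_image_eq (hι : Fintype.card ι = 4)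
    (himage : univ.image c = {s₁, s₂, s₃, s₄}) (h12 : s₁ < s₂) (h23 : s₂ < s₃) (h34 : s₃ < s₄) :
    Function.Injective c := by
  rw [← Set.injOn_univ, ← coe_univ, ← card_image_iff, himage, card_quadruple_of_lt h12 h23 h34,
    card_univ, hι]

lemma prod_comp_eq_of_image_eq {M : Type*} [CommMonoid M] (hι : Fintype.card ι = 4)
    (himage : univ.image c = {s₁, s₂, s₃, s₄}) (h12 : s₁ < s₂) (h23 : s₂ < s₃) (h34 : s₃ < s₄)
    (g : ℕ → M) : ∏ i, g (c i) = g s₁ * g s₂ * g s₃ * g s₄ := by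
  rw [← prod_image fun x _ y _ h => injective_of_image_eq hι himage h12 h23 h34 h, himage,
    prod_insert (by simp; omega), prod_insert (by simp; omega), prod_pair h34.ne]
  simp only [mul_assoc]

lemma lt_of_forall_lt_of_image_eq {m : ℕ} (himage : univ.image c = {s₁, s₂, s₃, s₄})
    (hc : ∀ i, c i < m) : s₄ < m := by
  obtain ⟨i, -, hi⟩ := mem_image.1 (himage ▸ by simp : s₄ ∈ univ.image c)
  exact hi ▸ hc i

lemma two_pow_mul_two_pow_mul_prod_sdiff_le [DecidableEq ι] {m : ℕ} (hι : Fintype.card ι = 4)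
    (himage : univ.image c = {s₁, s₂, s₃, s₄}) (h12 : s₁ < s₂) (h23 : s₂ < s₃) (h34 : s₃ < s₄)
    (hc : ∀ k, c k < m) {i j : ι} (hij : i ≠ j) :
    (2 : ℤ) ^ c i * 2 ^ c j * ∏ k ∈ univ \ {i, j}, (2 ^ m - 2 ^ c k) ≤
      2 ^ s₃ * 2 ^ s₄ * ((2 ^ m - 2 ^ s₁) * (2 ^ m - 2 ^ s₂)) := by
  have hinj := injective_of_image_eq hι himage h12 h23 h34
  have hmem : ∀ k, c k = s₁ ∨ c k = s₂ ∨ c k = s₃ ∨ c k = s₄ := fun k => by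
    have hk := mem_image_of_mem c (mem_univ k)
    rw [himage] at hk
    simpa using hk
  obtain ⟨k, l, hkl, hcompl⟩ : ∃ k l, k ≠ l ∧ univ \ {i, j} = {k, l} := by
    rw [← card_eq_two, card_sdiff_of_subset (subset_univ _), card_pair hij, card_univ, hι]
  have hk : k ∈ univ \ {i, j} := hcompl ▸ mem_insert_self k {l}
  have hl : l ∈ univ \ {i, j} := hcompl ▸ mem_insert_of_mem (mem_singleton_self l)
  simp only [mem_sdiff, mem_univ, mem_insert, mem_singleton, true_and, not_or] at hk hl
  have := hinj.ne hij; have := hinj.ne hkl; have := hinj.ne hk.1; have := hinj.ne hk.2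
  have := hinj.ne hl.1; have := hinj.ne hl.2
  have := hmem i; have := hmem j; have := hmem k; have := hmem l; have := hc k; have := hc l
  rw [hcompl, prod_pair hkl]
  rcases le_total (c k) (c l) with h | h
  · exact two_pow_mul_two_pow_mul_le (by omega) (by omega) (by omega) (by omega) (by omega)
  · rw [mul_comm ((2 : ℤ) ^ m - 2 ^ c k)]
    exact two_pow_mul_two_pow_mul_le (by omega) (by omega) (by omega) (by omega) (by omega)

end SortedValues

def sign₂ (x : ZMod 2) : ℤ := 1 - 2 * x.val

lemma sign₂_zero : sign₂ 0 = 1 := rfl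

lemma sign₂_add (x y : ZMod 2) : sign₂ (x + y) = sign₂ x * sign₂ y := by
  revert x y; decide

lemma sign₂_sum {α : Type*} (s : Finset α) (f : α → ZMod 2) :
    sign₂ (∑ i ∈ s, f i) = ∏ i ∈ s, sign₂ (f i) := by
  induction s using Finset.cons_induction with
  | empty => rfl
  | cons a s ha ih => rw [sum_cons, prod_cons, sign₂_add, ih]

lemma sum_sign₂_mul (c : ZMod 2) : ∑ x, sign₂ (c * x) = if c = 0 then 2 else 0 := by
  revert c; decide

lemma two_mul_card_filter_eq_one {α : Type*} (P : Finset α) (g : α → ZMod 2) :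
    2 * (#(P.filter fun p => g p = 1) : ℤ) = #P - ∑ p ∈ P, sign₂ (g p) := by
  have h : ∀ x : ZMod 2, sign₂ x = 1 - 2 * if x = 1 then 1 else 0 := by decide
  simp only [h, natCast_card_filter, sum_sub_distrib, ← mul_sum, sum_const, nsmul_eq_mul, mul_one]
  ring

variable {m : ℕ}

def charSum (D : Finset (Fin m → ZMod 2)) (u : Fin m → ZMod 2) : ℤ :=
  ∑ a ∈ D, sign₂ (dotp u a)

lemma charSum_zero (D : Finset (Fin m → ZMod 2)) : charSum D 0 = #D := by
  simp [charSum, dotp, sign₂_zero]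

lemma delta_eq_piFinset (S : Finset (Fin m)) :
    delta S = Fintype.piFinset fun i => if i ∈ S then univ else {0} := by
  ext a
  simp only [delta, supp, subset_iff, mem_filter, mem_univ, true_and, Fintype.mem_piFinset]
  refine forall_congr' fun i => ?_
  by_cases hi : i ∈ S <;> simp [hi]

lemma charSum_delta (S : Finset (Fin m)) (u : Fin m → ZMod 2) :
    charSum (delta S) u = if ∀ i ∈ S, u i = 0 then 2 ^ #S else 0 := by
  have hfactor : ∀ i, ∑ x ∈ (if i ∈ S then univ else {0}), sign₂ (u i * x) =
      if i ∈ S then (if u i = 0 then 2 else 0) else 1 := fun i => by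
    split_ifs <;> simp_all [sum_sign₂_mul, sign₂_zero]
  rw [charSum, delta_eq_piFinset]
  simp only [dotp, sign₂_sum]
  rw [← prod_univ_sum (fun i => if i ∈ S then univ else {0}) fun i x => sign₂ (u i * x)]
  simp only [hfactor, prod_ite_mem, univ_inter, prod_ite_zero]
  simp

lemma charSum_univ (u : Fin m → ZMod 2) :
    charSum univ u = if u = 0 then 2 ^ m else 0 := by
  have h := charSum_delta univ u
  rw [show delta univ = univ from filter_true_of_mem fun a _ => subset_univ _] at h
  simpa [funext_iff] using h

lemma charSum_deltac (S : Finset (Fin m)) (u : Fin m → ZMod 2) :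
    charSum (deltac S) u =
      (if u = 0 then 2 ^ m else 0) - if ∀ i ∈ S, u i = 0 then 2 ^ #S else 0 := by
  rw [← charSum_univ, ← charSum_delta, charSum, deltac, sum_sdiff_eq_sub (subset_univ _)]
  rfl

lemma card_deltac (S : Finset (Fin m)) : (#(deltac S) : ℤ) = 2 ^ m - 2 ^ #S := by
  simp [← charSum_zero, charSum_deltac]

lemma charSum_deltac_zero (S : Finset (Fin m)) :
    charSum (deltac S) 0 = 2 ^ m - 2 ^ #S := by
  rw [charSum_zero, card_deltac]

lemma charSum_deltac_of_ne_zero (S : Finset (Fin m)) {u : Fin m → ZMod 2} (hu : u ≠ 0) :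
    charSum (deltac S) u = if ∀ i ∈ S, u i = 0 then -2 ^ #S else 0 := by
  rw [charSum_deltac, if_neg hu]
  split_ifs <;> ring

lemma exists_charSum_deltac_eq_neg {S : Finset (Fin m)} (hS : #S < m) :
    ∃ v, charSum (deltac S) v = -2 ^ #S := by
  obtain ⟨j, -, hj⟩ :=
    exists_mem_notMem_of_card_lt_card (s := S) (t := univ) (by rwa [card_univ, Fintype.card_fin])
  refine ⟨Pi.single j 1, ?_⟩
  rw [charSum_deltac_of_ne_zero S (by simp [funext_iff, Pi.single_apply]), if_pos]
  intro i hi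
  exact Pi.single_eq_of_ne (by rintro rfl; exact hj hi) 1

lemma prod_charSum_deltac_le {ι : Type*} [Fintype ι] [DecidableEq ι] {S : ι → Finset (Fin m)}
    (hS : ∀ i, #(S i) < m) {u : ι → Fin m → ZMod 2} (hu : u ≠ 0) {B : ℤ} (hB : 0 ≤ B)
    (hpair : ∀ i j, i ≠ j →
      2 ^ #(S i) * 2 ^ #(S j) * ∏ k ∈ univ \ {i, j}, (2 ^ m - 2 ^ #(S k)) ≤ B) :
    ∏ i, charSum (deltac (S i)) (u i) ≤ B := by
  refine prod_le_of_pair_bound (J := univ.filter fun i => u i ≠ 0) ?_ (fun i hi => ?_)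
    (fun i hi => ?_) (fun i => by positivity) (fun i => two_pow_le_two_pow_sub_two_pow (hS i))
    hB hpair
  · obtain ⟨i, hi⟩ := Function.ne_iff.1 hu
    exact ⟨i, by simpa using hi⟩
  · rw [show u i = 0 by simpa using hi, charSum_deltac_zero]
  · rw [charSum_deltac_of_ne_zero _ (mem_filter.1 hi).2]
    split_ifs <;> simp

lemma exists_charSum_deltac_eq {ι : Type*} [DecidableEq ι] (S : ι → Finset (Fin m))
    (J : Finset ι) (hS : ∀ i ∈ J, #(S i) < m) :
    ∃ u : ι → Fin m → ZMod 2, ∀ i,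
      charSum (deltac (S i)) (u i) = if i ∈ J then -2 ^ #(S i) else 2 ^ m - 2 ^ #(S i) := by
  choose v hv using fun i (hi : i ∈ J) => exists_charSum_deltac_eq_neg (hS i hi)
  refine ⟨fun i => if hi : i ∈ J then v i hi else 0, fun i => ?_⟩
  by_cases hi : i ∈ J <;> simp [hi, hv, charSum_deltac_zero]

section SortedSizes

variable {ι : Type*} [Fintype ι] [DecidableEq ι] {S : ι → Finset (Fin m)} {s₁ s₂ s₃ s₄ : ℕ}

lemma prod_charSum_deltac_le_of_image_eq (hι : Fintype.card ι = 4)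
    (himage : univ.image (fun i => #(S i)) = {s₁, s₂, s₃, s₄})
    (h12 : s₁ < s₂) (h23 : s₂ < s₃) (h34 : s₃ < s₄) (hS : ∀ i, #(S i) < m)
    {u : ι → Fin m → ZMod 2} (hu : u ≠ 0) :
    ∏ i, charSum (deltac (S i)) (u i) ≤
      2 ^ s₃ * 2 ^ s₄ * ((2 ^ m - 2 ^ s₁) * (2 ^ m - 2 ^ s₂)) := by
  have hs₄ := lt_of_forall_lt_of_image_eq himage hS
  refine prod_charSum_deltac_le hS hu (mul_nonneg (by positivity) (mul_nonneg ?_ ?_))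
    fun i j hij => two_pow_mul_two_pow_mul_prod_sdiff_le hι himage h12 h23 h34 hS hij
  · exact (by positivity : (0 : ℤ) ≤ 2 ^ s₁).trans (two_pow_le_two_pow_sub_two_pow (by omega))
  · exact (by positivity : (0 : ℤ) ≤ 2 ^ s₂).trans (two_pow_le_two_pow_sub_two_pow (by omega))

lemma exists_prod_charSum_deltac_eq_of_image_eq (hι : Fintype.card ι = 4)
    (himage : univ.image (fun i => #(S i)) = {s₁, s₂, s₃, s₄})
    (h12 : s₁ < s₂) (h23 : s₂ < s₃) (h34 : s₃ < s₄) (hS : ∀ i, #(S i) < m) :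
    ∃ u : ι → Fin m → ZMod 2, ∏ i, charSum (deltac (S i)) (u i) =
      2 ^ s₃ * 2 ^ s₄ * ((2 ^ m - 2 ^ s₁) * (2 ^ m - 2 ^ s₂)) := by
  obtain ⟨u, hu⟩ :=
    exists_charSum_deltac_eq S (univ.filter fun i => s₃ ≤ #(S i)) fun i _ => hS i
  refine ⟨u, ?_⟩
  simp only [hu, mem_filter, mem_univ, true_and]
  rw [prod_comp_eq_of_image_eq hι himage h12 h23 h34
      fun x => if s₃ ≤ x then -2 ^ x else 2 ^ m - 2 ^ x,
    if_neg (by omega), if_neg (by omega), if_pos le_rfl, if_pos h34.le]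
  ring

end SortedSizes

lemma two_mul_cw (A B C E : Finset (Fin m → ZMod 2)) (t : Msg m) :
    2 * (cw A B C E t : ℤ) = #A * #B * #C * #E -
      charSum A (t.1 + t.2.2.2) * charSum B t.2.2.1 * charSum C t.2.1 * charSum E t.1 := by
  rw [cw, two_mul_card_filter_eq_one]
  simp only [card_product, Nat.cast_mul, charSum, sum_product, cword, sign₂_add, mul_assoc,
    ← mul_sum, ← sum_mul]

lemma cw_zero (A B C E : Finset (Fin m → ZMod 2)) : cw A B C E 0 = 0 := by
  simp [cw, cword, dotp]

def msgCoords (t : Msg m) : Fin 4 → Fin m → ZMod 2 := ![t.1 + t.2.2.2, t.2.2.1, t.2.1, t.1]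

lemma msgCoords_ne_zero {t : Msg m} (ht : t ≠ 0) : msgCoords t ≠ 0 := by
  contrapose! ht
  have h : ∀ i, msgCoords t i = 0 := fun i => by rw [ht, Pi.zero_apply]
  have h₁ : t.1 = 0 := h 3
  have h₄ : t.1 + t.2.2.2 = 0 := h 0
  rw [h₁, zero_add] at h₄
  exact Prod.ext h₁ (Prod.ext (h 2) (Prod.ext (h 1) h₄))

lemma msgCoords_surjective : Function.Surjective (msgCoords (m := m)) := fun u => by
  refine ⟨(u 3, u 2, u 1, u 0 + u 3), funext fun i => ?_⟩
  fin_cases i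
  · funext j
    simp only [msgCoords, Fin.zero_eta, Fin.isValue, Matrix.cons_val_zero, Pi.add_apply]
    rw [add_left_comm, CharTwo.add_self_eq_zero, add_zero]
  all_goals rfl

lemma two_mul_cw_deltac (X Y Z W : Finset (Fin m)) (t : Msg m) :
    2 * (cw (deltac X) (deltac Y) (deltac Z) (deltac W) t : ℤ) =
      ∏ i, ((2 : ℤ) ^ m - 2 ^ #(![X, Y, Z, W] i)) -
        ∏ i, charSum (deltac (![X, Y, Z, W] i)) (msgCoords t i) := by
  simp [two_mul_cw, Fin.prod_univ_four, card_deltac, msgCoords]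

theorem stmt9_general (m : ℕ) (X Y Z W : Finset (Fin m))
    (hXm : X.card < m) (hYm : Y.card < m) (hZm : Z.card < m) (hWm : W.card < m)
    (s₁ s₂ s₃ s₄ : ℕ) (h12 : s₁ < s₂) (h23 : s₂ < s₃) (h34 : s₃ < s₄)
    (hsort : ({s₁, s₂, s₃, s₄} : Finset ℕ) = {X.card, Y.card, Z.card, W.card}) :
    (∀ t : Msg m,
      cw (deltac X) (deltac Y) (deltac Z) (deltac W) t = 0 ↔ t = 0) ∧
    (∀ t : Msg m, t ≠ 0 →
      (2 ^ m - 2 ^ s₁) * (2 ^ m - 2 ^ s₂) * (2 ^ m - 2 ^ s₃ - 2 ^ s₄) * 2 ^ m ≤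
        2 * cw (deltac X) (deltac Y) (deltac Z) (deltac W) t) ∧
    (∃ t : Msg m,
      2 * cw (deltac X) (deltac Y) (deltac Z) (deltac W) t =
        (2 ^ m - 2 ^ s₁) * (2 ^ m - 2 ^ s₂) * (2 ^ m - 2 ^ s₃ - 2 ^ s₄) * 2 ^ m) := by
  set S : Fin 4 → Finset (Fin m) := ![X, Y, Z, W]
  have hS : ∀ i, #(S i) < m := by simp [Fin.forall_fin_succ, S, hXm, hYm, hZm, hWm]
  have himage : univ.image (fun i => #(S i)) = {s₁, s₂, s₃, s₄} := by
    rw [hsort]; ext; simp [Fin.exists_fin_succ, S, eq_comm]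
  have hs₄ := lt_of_forall_lt_of_image_eq himage hS
  have h₃₄ := two_pow_add_two_pow_lt h34 hs₄
  have hcast := natCast_two_pow_sub_mul_eq_sub (by omega : s₁ ≤ m) (by omega : s₂ ≤ m) h₃₄.le
  have hlen := prod_comp_eq_of_image_eq (Fintype.card_fin 4) himage h12 h23 h34
    fun x => (2 : ℤ) ^ m - 2 ^ x
  have hbound : ∀ t ≠ 0, (((2 ^ m - 2 ^ s₁) * (2 ^ m - 2 ^ s₂) * (2 ^ m - 2 ^ s₃ - 2 ^ s₄) *
      2 ^ m : ℕ) : ℤ) ≤ 2 * cw (deltac X) (deltac Y) (deltac Z) (deltac W) t := fun t ht => by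
    rw [hcast, two_mul_cw_deltac, hlen]
    linarith [prod_charSum_deltac_le_of_image_eq (Fintype.card_fin 4) himage h12 h23 h34 hS
      (msgCoords_ne_zero ht)]
  refine ⟨fun t => ⟨fun h => ?_, fun h => h ▸ cw_zero _ _ _ _⟩,
    fun t ht => by exact_mod_cast hbound t ht, ?_⟩
  · by_contra ht
    have := hbound t ht
    rw [h] at this
    have := two_pow_sub_mul_pos (by omega : s₁ < m) (by omega : s₂ < m) h₃₄
    omega
  · obtain ⟨u, hu⟩ :=
      exists_prod_charSum_deltac_eq_of_image_eq (Fintype.card_fin 4) himage h12 h23 h34 hS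
    obtain ⟨t, rfl⟩ := msgCoords_surjective u
    refine ⟨t, Nat.cast_injective (R := ℤ) ?_⟩
    rw [hcast, Nat.cast_mul, Nat.cast_ofNat, two_mul_cw_deltac, hlen, hu]

theorem stmt9 (m : ℕ) (hm : 0 < m) (X Y Z W : Finset (Fin m))
    (hXY : X.card ≠ Y.card) (hXZ : X.card ≠ Z.card) (hXW : X.card ≠ W.card)
    (hYZ : Y.card ≠ Z.card) (hYW : Y.card ≠ W.card) (hZW : Z.card ≠ W.card)
    (hXm : X.card < m) (hYm : Y.card < m) (hZm : Z.card < m) (hWm : W.card < m)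
    (s₁ s₂ s₃ s₄ : ℕ) (h12 : s₁ < s₂) (h23 : s₂ < s₃) (h34 : s₃ < s₄)
    (hsort : ({s₁, s₂, s₃, s₄} : Finset ℕ) = {X.card, Y.card, Z.card, W.card}) :
    (∀ t : Msg m,
      cw (deltac X) (deltac Y) (deltac Z) (deltac W) t = 0 ↔ t = 0) ∧
    (∀ t : Msg m, t ≠ 0 →
      (2 ^ m - 2 ^ s₁) * (2 ^ m - 2 ^ s₂) * (2 ^ m - 2 ^ s₃ - 2 ^ s₄) * 2 ^ m ≤
        2 * cw (deltac X) (deltac Y) (deltac Z) (deltac W) t) ∧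
    (∃ t : Msg m,
      2 * cw (deltac X) (deltac Y) (deltac Z) (deltac W) t =
        (2 ^ m - 2 ^ s₁) * (2 ^ m - 2 ^ s₂) * (2 ^ m - 2 ^ s₃ - 2 ^ s₄) * 2 ^ m) :=
  stmt9_general m X Y Z W hXm hYm hZm hWm s₁ s₂ s₃ s₄ h12 h23 h34 hsort
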